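/- arXiv:2004.01124 — 3 statements merged into one kernel-verified Lean document; each statement's English description precedes it below -/
import Mathlib

section
/- Let (G, dist) be a metric space, D a finite subset of G, q ∈ G, and τ ≥ 0 a real threshold. Let A ⊆ D be a set of already identified results, and let C ⊆ D be a candidate set, i.e., R(q, τ) \ A ⊆ C. Let V ⊆ C be the set of verified candidates, and suppose r ∈ V satisfies dist(q, r) = δ with δ ≤ τ, while every g ∈ V with g ≠ r satisfies dist(q, g) > τ (r is the first result found in C). Then the refined candidate set RC(C) = (C \ V) ∩ (R(r, τ + δ) \ R(r, τ − δ)) contains all remaining results: R(q, τ) \ (A ∪ V ∪ R(r, τ − δ)) ⊆ RC(C). (Lemma 3 of the paper.) -/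
/-- The result set of a similarity query: all graphs in the database `D`
whose distance (GED) to `g` is at most `t`. -/
def resultSet {G : Type*} [MetricSpace G] (D : Finset G) (g : G) (t : ℝ) : Set G :=
  {x | x ∈ D ∧ dist g x ≤ t}

/-- Lemma 3: if `r` is the first result identified among the verified candidates `V` of a
candidate set `C`, then the refined candidate set
`RC(C) = (C \ V) ∩ (R(r, τ + δ) \ R(r, τ − δ))` contains all remaining results. -/
theorem refined_candidate_set_contains_remaining_results {G : Type*} [MetricSpace G]
    (D : Finset G) (q : G) (τ : ℝ) (hτ : 0 ≤ τ)
    (A C V : Set G) (hA : A ⊆ ↑D) (hC : C ⊆ ↑D)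
    (hcand : resultSet D q τ \ A ⊆ C) (hV : V ⊆ C)
    (r : G) (hr : r ∈ V) (δ : ℝ) (hδ : dist q r = δ) (hδτ : δ ≤ τ)
    (hfirst : ∀ g ∈ V, g ≠ r → τ < dist q g) :
    resultSet D q τ \ (A ∪ V ∪ resultSet D r (τ - δ)) ⊆
      (C \ V) ∩ (resultSet D r (τ + δ) \ resultSet D r (τ - δ)) := by
  rintro x ⟨⟨hxD, hxq⟩, hnot⟩
  simp only [Set.mem_union, not_or] at hnot
  obtain ⟨⟨hxA, hxV⟩, hxR⟩ := hnot
  have hxC : x ∈ C := hcand ⟨⟨hxD, hxq⟩, hxA⟩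
  have htri : dist r x ≤ dist r q + dist q x := dist_triangle r q x
  have hrq : dist r q = δ := by rw [dist_comm]; exact hδ
  refine ⟨⟨hxC, hxV⟩, ⟨hxD, ?_⟩, ?_⟩
  · rw [hrq] at htri; linarith
  · intro h; exact hxR h
end

section
/- Let (G, dist) be a metric space, D a finite subset of G, q ∈ G, and τ ≥ 0 a real threshold. Suppose we are given a number n ∈ ℕ and sequences of sets C_0, C_1, …, C_n ⊆ D, sets V_0, …, V_{n−1}, and elements r_0, …, r_{n−1} ∈ D with δ_i := dist(q, r_i) ≤ τ, such that: (i) R(q, τ) ⊆ C_0; (ii) for each i < n, r_i ∈ V_i ⊆ C_i, every g ∈ V_i with g ≠ r_i satisfies dist(q, g) > τ, and C_{i+1} = (C_i \ V_i) ∩ (R(r_i, τ + δ_i) \ R(r_i, τ − δ_i)); and (iii) the final set C_n contains no g with dist(q, g) ≤ τ (no further result is found). Then the result set of the query equals the union of the pre-computed result sets of the identified results: R(q, τ) = ⋃_{i < n} R(r_i, τ − δ_i). (Combination of Lemma 4 and Corollary 1 of the paper, describing correctness of the Nass search algorithm.) -/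
/-- Correctness of the Nass search algorithm (Lemma 4 together with Corollary 1):
if candidates are repeatedly verified and regenerated, starting from an initial candidate
set `C 0 ⊇ R(q, τ)`, where at round `i` the first result `r i` (with `δ i = dist q (r i)`)
is found among the verified candidates `V i` and the candidate set is refined to
`C (i+1) = (C i \ V i) ∩ (R(r i, τ + δ i) \ R(r i, τ − δ i))`, and the final candidate set
`C n` contains no result, then `R(q, τ) = ⋃_{i < n} R(r i, τ − δ i)`. -/
theorem nass_search_correct {G : Type*} [MetricSpace G]
    (D : Finset G) (q : G) (τ : ℝ) (hτ : 0 ≤ τ)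
    (n : ℕ) (C V : ℕ → Set G) (r : ℕ → G)
    (hrD : ∀ i < n, r i ∈ D)
    (hδτ : ∀ i < n, dist q (r i) ≤ τ)
    (hC0 : resultSet D q τ ⊆ C 0)
    (hrV : ∀ i < n, r i ∈ V i)
    (hVC : ∀ i < n, V i ⊆ C i)
    (hfirst : ∀ i < n, ∀ g ∈ V i, g ≠ r i → τ < dist q g)
    (hrefine : ∀ i < n, C (i + 1) =
      (C i \ V i) ∩
        (resultSet D (r i) (τ + dist q (r i)) \ resultSet D (r i) (τ - dist q (r i))))
    (hfinal : ∀ g ∈ C n, τ < dist q g) :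
    resultSet D q τ = ⋃ i < n, resultSet D (r i) (τ - dist q (r i)) := by
  ext x
  simp only [Set.mem_iUnion]
  constructor
  · rintro ⟨hxD, hxq⟩
    have key : ∀ k i, i + k = n → x ∈ C i →
        ∃ j, ∃ _ : j < n, x ∈ resultSet D (r j) (τ - dist q (r j)) := by
      intro k
      induction k with
      | zero =>
        intro i hi hx
        subst hi
        simp only [Nat.add_zero] at hx ⊢
        exact absurd hxq (not_le.mpr (hfinal x hx))
      | succ k ih =>
        intro i hi hx
        have hin : i < n := by omega
        by_cases hxr : x ∈ resultSet D (r i) (τ - dist q (r i))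
        · exact ⟨i, hin, hxr⟩
        · by_cases hxV : x ∈ V i
          · rcases eq_or_ne x (r i) with h | h
            · exact absurd hxr (by
                refine not_not_intro ⟨hxD, ?_⟩
                rw [h, dist_self]
                linarith [hδτ i hin])
            · exact absurd hxq (not_le.mpr (hfirst i hin x hxV h))
          · refine ih (i+1) (by omega) ?_
            rw [hrefine i hin]
            refine ⟨⟨hx, hxV⟩, ⟨hxD, ?_⟩, hxr⟩
            calc dist (r i) x ≤ dist (r i) q + dist q x := dist_triangle _ _ _
              _ ≤ dist q (r i) + τ := by rw [dist_comm]; linarith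
              _ = τ + dist q (r i) := by ring
    exact key n 0 (by omega) (hC0 ⟨hxD, hxq⟩)
  · rintro ⟨i, ⟨hin, hxD, hxr⟩⟩
    refine ⟨hxD, ?_⟩
    calc dist q x ≤ dist q (r i) + dist (r i) x := dist_triangle _ _ _
      _ ≤ τ := by linarith
end

section
/- Let (G, dist) be a metric space, D a finite subset of G, q ∈ G, and τ ≥ 0 a real threshold. Let g ∈ D with dist(q, g) = δ and δ ≤ τ. Let d' : G → ℝ be a function with d'(x) ≤ dist(g, x) for all x ∈ D (an index whose entries are exact GEDs or GED lower bounds), and define the approximate result set R_g = {x ∈ D | d'(x) ≤ τ + δ}. Let A ⊆ R(g, τ − δ) (the identified results taken from exact index entries), let C ⊆ D satisfy R(q, τ) ⊆ C, and let V ⊆ C with g ∈ V and every h ∈ V with h ≠ g satisfying dist(q, h) > τ. Then: (a) A ⊆ R(q, τ), and (b) the refined candidate set C' = (C \ V) ∩ (R_g \ A) contains all remaining results, i.e., R(q, τ) \ (V ∪ A) ⊆ C'. (Correctness of Algorithm 5 of the paper: candidate regeneration remains correct when the index contains inexact entries that are GED lower bounds.) -/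
/-- Correctness of Algorithm 5: candidate regeneration remains correct with an index
containing inexact entries. If `d'` stores lower bounds of the true distances from `g`,
`R_g = {x ∈ D | d' x ≤ τ + δ}` is the approximate result set, `A` is taken from exact
index entries within `τ − δ`, and `g` is the first result found among the verified
candidates `V` of a candidate set `C ⊇ R(q, τ)`, then (a) `A ⊆ R(q, τ)` and (b) the
refined candidate set `C' = (C \ V) ∩ (R_g \ A)` contains all remaining results. -/
theorem inexact_index_regeneration_correct {G : Type*} [MetricSpace G]
    (D : Finset G) (q : G) (τ : ℝ) (hτ : 0 ≤ τ)
    (g : G) (hg : g ∈ D) (δ : ℝ) (hδ : dist q g = δ) (hδτ : δ ≤ τ)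
    (d' : G → ℝ) (hd' : ∀ x ∈ D, d' x ≤ dist g x)
    (A : Set G) (hA : A ⊆ resultSet D g (τ - δ))
    (C : Set G) (hC : C ⊆ ↑D) (hcand : resultSet D q τ ⊆ C)
    (V : Set G) (hV : V ⊆ C) (hgV : g ∈ V)
    (hfirst : ∀ h ∈ V, h ≠ g → τ < dist q h) :
    A ⊆ resultSet D q τ ∧
      resultSet D q τ \ (V ∪ A) ⊆
        (C \ V) ∩ ({x | x ∈ D ∧ d' x ≤ τ + δ} \ A) := by
  constructor
  · intro x hx
    obtain ⟨hxD, hxd⟩ := hA hx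
    refine ⟨hxD, ?_⟩
    calc dist q x ≤ dist q g + dist g x := dist_triangle q g x
    _ ≤ δ + (τ - δ) := by linarith
    _ = τ := by ring
  · rintro x ⟨⟨hxD, hxd⟩, hxVA⟩
    have hxV : x ∉ V := fun h => hxVA (Or.inl h)
    have hxA : x ∉ A := fun h => hxVA (Or.inr h)
    refine ⟨⟨hcand ⟨hxD, hxd⟩, hxV⟩, ⟨hxD, ?_⟩, hxA⟩
    calc d' x ≤ dist g x := hd' x hxD
    _ ≤ dist g q + dist q x := dist_triangle g q x
    _ ≤ δ + τ := by rw [dist_comm]; linarith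
    _ = τ + δ := by ring
end
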